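/- arXiv:1710.01917 — 2 statements merged into one kernel-verified Lean document; each statement's English description precedes it below -/
import Mathlib

section
/- Let Γ be a connected highly-regular graph with CAM C = [c_{i,j}]_{1≤i,j≤m}. Then for each i ∈ {0, 1, …, diam(Γ)} there exists a nonempty subset S_i of {1, …, m}, depending only on C and i, such that for every vertex u and every witnessing partition V_1(u) = {u}, V_2(u), …, V_m(u) for u, one has D_i(u) = ⊔_{t∈S_i} V_t(u). -/
/-- A partition of the vertex set (encoded as a cell-assignment map `P : V → Fin m`)
witnessing that `C` is a collapsed adjacency matrix at the vertex `u`: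
the cell of index `0` is exactly `{u}`, every cell is nonempty, and every vertex in
cell `j` has exactly `C i j` neighbours in cell `i`. -/
def IsWitnessingPartition {V : Type*} [Fintype V] (G : SimpleGraph V) {m : ℕ}
    (C : Fin m → Fin m → ℕ) (u : V) (P : V → Fin m) : Prop :=
  (∀ v : V, (P v : ℕ) = 0 ↔ v = u) ∧
  (∀ t : Fin m, ∃ v : V, P v = t) ∧
  (∀ (i j : Fin m) (y : V), P y = j → {z : V | P z = i ∧ G.Adj y z}.ncard = C i j)

/-- `C` is a collapsed adjacency matrix (CAM) of size `m` for `G`: `2 ≤ m`, `m < n`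
(with `m = n` allowed only when `n = 2`), and every vertex admits a witnessing partition. -/
def IsCAM {V : Type*} [Fintype V] (G : SimpleGraph V) {m : ℕ}
    (C : Fin m → Fin m → ℕ) : Prop :=
  2 ≤ m ∧ (m < Fintype.card V ∨ (m = Fintype.card V ∧ Fintype.card V = 2)) ∧
  ∀ u : V, ∃ P : V → Fin m, IsWitnessingPartition G C u P

/-- A graph is highly-regular if it admits some CAM. -/
def IsHighlyRegular {V : Type*} [Fintype V] (G : SimpleGraph V) : Prop :=
  ∃ (m : ℕ) (C : Fin m → Fin m → ℕ), IsCAM G C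

/-- The index of a highly-regular graph: the least size of a CAM. -/
noncomputable def hrIndex {V : Type*} [Fintype V] (G : SimpleGraph V) : ℕ :=
  sInf {m : ℕ | ∃ C : Fin m → Fin m → ℕ, IsCAM G C}

/-- A connected graph is distance-regular if the numbers `|D_1(v) ∩ D_{i-1}(u)|`,
`|D_1(v) ∩ D_i(u)|`, `|D_1(v) ∩ D_{i+1}(u)|` depend only on `i = d(u,v)`. -/
def IsDistanceRegular {V : Type*} [Fintype V] (G : SimpleGraph V) : Prop :=
  G.Connected ∧ ∀ i : ℕ, 1 ≤ i → i ≤ G.diam →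
    ∀ j : ℕ, j = i - 1 ∨ j = i ∨ j = i + 1 →
    ∀ u v x y : V, G.dist u v = i → G.dist x y = i →
      {w : V | G.Adj v w ∧ G.dist u w = j}.ncard =
      {w : V | G.Adj y w ∧ G.dist x w = j}.ncard

/-!
Recording which cells of a witnessing partition send edges to which gives a graph on the cell
indices that depends only on `C`. An edge of `Γ` either stays inside a cell or maps to an edge
of this cell graph, and every edge at the cell of `v` lifts to an edge at `v`; so walks project
and lift without growing. Since `{u}` is a cell, `d(u, v)` is the distance from the first cell
to the cell of `v`, and `S_i` is the set of cells at distance `i` from the first.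
-/

namespace SimpleGraph

variable {V W : Type*} {G : SimpleGraph V} {H : SimpleGraph W}

lemma Reachable.exists_dist_eq_of_le_dist {u v : V} (h : G.Reachable u v) {i : ℕ}
    (hi : i ≤ G.dist u v) : ∃ w, G.dist u w = i := by
  obtain ⟨p, hp⟩ := h.exists_walk_length_eq_dist
  refine ⟨p.getVert i, ?_⟩
  rw [← length_eq_dist_of_subwalk hp (p.isSubwalk_take i), Walk.take_length]
  omega

section Projection

variable {P : V → W}

lemma Walk.exists_walk_map_length_le
    (hmap : ∀ v w, G.Adj v w → P v = P w ∨ H.Adj (P v) (P w)) {v w : V} (p : G.Walk v w) :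
    ∃ q : H.Walk (P v) (P w), q.length ≤ p.length := by
  induction p with
  | nil => exact ⟨.nil, le_rfl⟩
  | @cons a b c hab p ih =>
    obtain ⟨q, hq⟩ := ih
    rcases hmap a b hab with heq | hadj
    · exact ⟨q.copy heq.symm rfl, by simpa using hq.trans (Nat.le_succ _)⟩
    · exact ⟨.cons hadj q, by simpa using hq⟩

lemma Walk.exists_lift_length_eq (hlift : ∀ v t, H.Adj (P v) t → ∃ w, G.Adj v w ∧ P w = t)
    {a b : W} (q : H.Walk a b) (v : V) (hv : P v = a) :
    ∃ z, P z = b ∧ ∃ p : G.Walk v z, p.length = q.length := by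
  induction q generalizing v with
  | nil => exact ⟨v, hv, .nil, rfl⟩
  | @cons a c b hac q ih =>
    subst hv
    obtain ⟨w, hvw, rfl⟩ := hlift v c hac
    obtain ⟨z, hz, p, hp⟩ := ih w rfl
    exact ⟨z, hz, .cons hvw p, by simp [hp]⟩

lemma Connected.dist_eq_dist_of_lift (hconn : G.Connected)
    (hmap : ∀ v w, G.Adj v w → P v = P w ∨ H.Adj (P v) (P w))
    (hlift : ∀ v t, H.Adj (P v) t → ∃ w, G.Adj v w ∧ P w = t)
    {u : V} (hu : ∀ v, P v = P u → v = u) (v : V) :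
    G.dist u v = H.dist (P u) (P v) := by
  obtain ⟨p, hp⟩ := hconn.exists_walk_length_eq_dist u v
  obtain ⟨q, hqp⟩ := p.exists_walk_map_length_le hmap
  obtain ⟨q', hq'⟩ := Reachable.exists_walk_length_eq_dist ⟨q⟩
  obtain ⟨z, hz, p', hp'⟩ := q'.reverse.exists_lift_length_eq hlift v rfl
  have hzu := hu z hz
  subst z
  refine le_antisymm ?_ ?_
  · calc G.dist u v ≤ p'.length := dist_comm.trans_le (dist_le p')
      _ = H.dist (P u) (P v) := by rw [hp', Walk.length_reverse, hq']
  · calc H.dist (P u) (P v) ≤ q.length := dist_le q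
      _ ≤ p.length := hqp
      _ = G.dist u v := hp

end Projection

end SimpleGraph

/-- Cells `s ≠ t` are adjacent when each vertex of either one has a neighbour in the other. -/
def camGraph {m : ℕ} (C : Fin m → Fin m → ℕ) : SimpleGraph (Fin m) where
  Adj s t := s ≠ t ∧ C s t ≠ 0 ∧ C t s ≠ 0
  symm := ⟨fun _ _ ⟨hne, hst, hts⟩ => ⟨hne.symm, hts, hst⟩⟩
  loopless := ⟨fun _ ⟨hne, _⟩ => hne rfl⟩

namespace IsWitnessingPartition

variable {V : Type*} [Fintype V] {G : SimpleGraph V} {m : ℕ} {C : Fin m → Fin m → ℕ}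
  {u : V} {P : V → Fin m}

lemma apply_eq_apply_self_iff (hP : IsWitnessingPartition G C u P) {v : V} :
    P v = P u ↔ v = u := by
  rw [← hP.1 v, Fin.ext_iff, (hP.1 u).2 rfl]

lemma apply_self_eq {a : V} {Q : V → Fin m} (hP : IsWitnessingPartition G C u P)
    (hQ : IsWitnessingPartition G C a Q) : P u = Q a :=
  Fin.ext (((hP.1 u).2 rfl).trans ((hQ.1 a).2 rfl).symm)

lemma exists_adj_of_ne_zero (hP : IsWitnessingPartition G C u P) {y : V} {t : Fin m}
    (h : C t (P y) ≠ 0) : ∃ z, G.Adj y z ∧ P z = t := by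
  rw [← hP.2.2 t (P y) y rfl] at h
  obtain ⟨z, hzt, hyz⟩ := Set.nonempty_of_ncard_ne_zero h
  exact ⟨z, hyz, hzt⟩

lemma ne_zero_of_adj (hP : IsWitnessingPartition G C u P) {y z : V} (h : G.Adj y z) :
    C (P z) (P y) ≠ 0 := by
  rw [← hP.2.2 (P z) (P y) y rfl]
  have hz : z ∈ {x : V | P x = P z ∧ G.Adj y x} := ⟨rfl, h⟩
  exact ((Set.ncard_pos (Set.toFinite _)).2 ⟨z, hz⟩).ne'

lemma dist_eq (hP : IsWitnessingPartition G C u P) (hconn : G.Connected) (v : V) :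
    G.dist u v = (camGraph C).dist (P u) (P v) := by
  refine hconn.dist_eq_dist_of_lift ?_ ?_ (fun v => hP.apply_eq_apply_self_iff.1) v
  · intro v w h
    by_cases heq : P v = P w
    · exact .inl heq
    · exact .inr ⟨heq, hP.ne_zero_of_adj h.symm, hP.ne_zero_of_adj h⟩
  · intro v t h
    exact hP.exists_adj_of_ne_zero h.2.2

end IsWitnessingPartition

/-- For a connected highly-regular graph with CAM `C` and each
`i ∈ {0, …, diam Γ}` there is a nonempty `S_i ⊆ {1, …, m}`, depending only on `C` and
`i`, such that `D_i(u) = ⊔_{t ∈ S_i} V_t(u)` for every `u` and every witnessing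
partition at `u`. -/
theorem stmt10 {V : Type*} [Fintype V] (G : SimpleGraph V) (hconn : G.Connected)
    {m : ℕ} (C : Fin m → Fin m → ℕ) (hC : IsCAM G C) :
    ∀ i : ℕ, i ≤ G.diam → ∃ S : Finset (Fin m), S.Nonempty ∧
      ∀ (u : V) (P : V → Fin m), IsWitnessingPartition G C u P →
        ∀ v : V, (P v ∈ S ↔ G.dist u v = i) := by
  intro i hi
  have := hconn.nonempty
  obtain ⟨a, b, hab⟩ := G.exists_dist_eq_diam
  obtain ⟨w, hw⟩ := (hconn a b).exists_dist_eq_of_le_dist (hab ▸ hi)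
  obtain ⟨Q, hQ⟩ := hC.2.2 a
  refine ⟨Finset.univ.filter fun t => (camGraph C).dist (Q a) t = i, ⟨Q w, ?_⟩,
    fun u P hP v => ?_⟩
  · simpa [← hQ.dist_eq hconn] using hw
  · simp [hP.dist_eq hconn, hP.apply_self_eq hQ]
end

section
/- Let Γ be a connected highly-regular graph. Then I(Γ) ≥ 1 + diam(Γ). -/
section Helpers

variable {V : Type*} {G : SimpleGraph V}

lemma dist_getVert_le (hconn : G.Connected) {u v : V} (p : G.Walk u v) (k : ℕ) :
    G.dist u (p.getVert k) ≤ k := by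
  induction p generalizing k with
  | nil => simp [SimpleGraph.Walk.getVert, SimpleGraph.dist_self]
  | @cons a b c h q ih =>
    cases k with
    | zero => simp [SimpleGraph.Walk.getVert]
    | succ k =>
      rw [SimpleGraph.Walk.getVert_cons_succ]
      calc G.dist a (q.getVert k) ≤ G.dist a b + G.dist b (q.getVert k) :=
            hconn.dist_triangle
        _ ≤ 1 + k := by
            gcongr
            · exact le_trans (SimpleGraph.dist_le (SimpleGraph.Walk.cons h SimpleGraph.Walk.nil)) (by simp)
            · exact ih k
        _ = k + 1 := by omega

lemma dist_getVert_eq (hconn : G.Connected) {u v : V} (p : G.Walk u v)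
    (hp : p.length = G.dist u v) {k : ℕ} (hk : k ≤ p.length) :
    G.dist u (p.getVert k) = k := by
  refine le_antisymm (dist_getVert_le hconn p k) ?_
  have h1 : G.dist v (p.getVert k) ≤ p.length - k := by
    have := dist_getVert_le hconn p.reverse (p.length - k)
    rwa [SimpleGraph.Walk.getVert_reverse, Nat.sub_sub_self hk] at this
  have h2 : G.dist u v ≤ G.dist u (p.getVert k) + G.dist (p.getVert k) v :=
    hconn.dist_triangle
  rw [SimpleGraph.dist_comm (u := p.getVert k) (v := v)] at h2
  omega

lemma exists_dist_eq_of_le (hconn : G.Connected) {u v : V} {k : ℕ}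
    (hk : k ≤ G.dist u v) : ∃ w, G.dist u w = k := by
  obtain ⟨p, hp⟩ := hconn.exists_walk_length_eq_dist u v
  exact ⟨p.getVert k, dist_getVert_eq hconn p hp (by omega)⟩

lemma exists_adj_dist (hconn : G.Connected) {u y : V} {d : ℕ}
    (h : G.dist u y = d + 1) : ∃ w, G.Adj y w ∧ G.dist u w = d := by
  obtain ⟨p, hp⟩ := hconn.exists_walk_length_eq_dist u y
  refine ⟨p.getVert d, ?_, dist_getVert_eq hconn p hp (by omega)⟩
  have hadj := p.adj_getVert_succ (i := d) (by omega)
  have : p.getVert (d + 1) = y := by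
    have hl : p.length = d + 1 := by omega
    rw [← hl]; exact p.getVert_length
  rw [this] at hadj
  exact hadj.symm

end Helpers

section Sat

variable {V : Type*} [Fintype V] {G : SimpleGraph V}

lemma saturation (hconn : G.Connected) {m : ℕ} {C : Fin m → Fin m → ℕ} {u : V}
    {P : V → Fin m} (hw : IsWitnessingPartition G C u P) :
    ∀ d : ℕ, ∀ y z : V, P y = P z → G.dist u y ≤ d → G.dist u z ≤ d := by
  obtain ⟨h1, _, h3⟩ := hw
  intro d
  induction d with
  | zero =>
    intro y z hyz hy
    have hy0 : y = u := by
      have h0 : G.dist u y = 0 := Nat.le_zero.mp hy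
      exact (hconn.dist_eq_zero_iff.mp h0).symm
    have hz0 : (P z : ℕ) = 0 := by rw [← hyz]; exact (h1 y).mpr hy0
    have hz : z = u := (h1 z).mp hz0
    subst hz
    simp [SimpleGraph.dist_self]
  | succ d ih =>
    intro y z hyz hy
    rcases Nat.lt_or_ge (G.dist u y) (d + 1) with hlt | hge
    · exact le_trans (ih y z hyz (by omega)) (by omega)
    · have hdy : G.dist u y = d + 1 := by omega
      obtain ⟨w, hadj, hdw⟩ := exists_adj_dist hconn hdy
      have hcy := h3 (P w) (P y) y rfl
      have hcz := h3 (P w) (P y) z hyz.symm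
      have hCpos : 0 < C (P w) (P y) := by
        rw [← hcy]
        rw [Set.ncard_pos (Set.toFinite _)]
        exact ⟨w, rfl, hadj⟩
      have hne : {x : V | P x = P w ∧ G.Adj z x}.Nonempty := by
        rw [← Set.ncard_pos (Set.toFinite _), hcz]; exact hCpos
      obtain ⟨w', hw'P, hw'adj⟩ := hne
      have hdw' : G.dist u w' ≤ d := ih w w' hw'P.symm (by omega)
      calc G.dist u z ≤ G.dist u w' + G.dist w' z := hconn.dist_triangle
        _ ≤ d + 1 := by
            have : G.dist w' z ≤ 1 := by
              rw [SimpleGraph.dist_comm]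
              exact le_of_eq (SimpleGraph.dist_eq_one_iff_adj.mpr hw'adj)
            omega

lemma dist_const_on_cells (hconn : G.Connected) {m : ℕ} {C : Fin m → Fin m → ℕ} {u : V}
    {P : V → Fin m} (hw : IsWitnessingPartition G C u P) {y z : V}
    (hyz : P y = P z) : G.dist u y = G.dist u z :=
  le_antisymm (saturation hconn hw _ z y hyz.symm le_rfl)
    (saturation hconn hw _ y z hyz le_rfl)

end Sat


/-- For a connected highly-regular graph, `I(Γ) ≥ 1 + diam Γ`. -/
theorem stmt14 {V : Type*} [Fintype V] (G : SimpleGraph V)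
    (hconn : G.Connected) (hhr : IsHighlyRegular G) :
    1 + G.diam ≤ hrIndex G := by
  have hne : Set.Nonempty {m : ℕ | ∃ C : Fin m → Fin m → ℕ, IsCAM G C} := by
    obtain ⟨m, C, hC⟩ := hhr; exact ⟨m, C, hC⟩
  rw [hrIndex]
  refine le_csInf hne ?_
  rintro m ⟨C, h2, _, hP⟩
  have : Nonempty V := hconn.nonempty
  obtain ⟨u, v, huv⟩ := G.exists_dist_eq_diam
  obtain ⟨P, hw⟩ := hP u
  have hsel : ∀ k : Fin (G.diam + 1), ∃ w : V, G.dist u w = (k : ℕ) := fun k =>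
    exists_dist_eq_of_le hconn (by rw [huv]; omega)
  choose f hf using hsel
  have hinj : Function.Injective (fun k => P (f k)) := by
    intro k k' h
    have := dist_const_on_cells hconn hw h
    rw [hf k, hf k'] at this
    exact Fin.ext this
  have := Fintype.card_le_of_injective _ hinj
  simpa [Nat.add_comm] using this
end
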